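/- Suppose f is worst-case monotone and worst-case submodular and f(∅) = 0, let B be a positive integer budget with c(e) ≤ B for every e ∈ E, and let π^g be the budgeted worst-case density-greedy policy. Then for every adaptive policy π* with c_wc(π*) ≤ B, max{ f_wc(π^g), max_{e ∈ E} Δwc(e|∅) } ≥ ((1 − 1/e)/2) · f_wc(π*). -/

import Mathlib

/-!
Write `Q = f_wc(π*)`. If every item still available at an observation `ψ` has worst-case
density at most `d`, an adversary that runs `π*` and always answers with a worst-case state,
given `ψ` and its previous answers, keeps `f` below `f ψ + d B` by worst-case submodularity.
Applied to the greedy choice this gives `Q ≤ f ψ + B Δwc(e|ψ)/c(e)` along the greedy run, hence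
`Q - f ψ ≤ Q exp (-c(ψ)/B)`. The greedy policy stops either with everything observed or when
its next item `e` overflows the budget; adding `e` would have closed all but a fraction
`exp (-1)` of the gap, and `Δwc(e|ψ) ≤ Δwc(e|∅)`, so `(1 - exp (-1)) Q ≤ f_wc(π^g) + max_e Δwc(e|∅)`.
-/

namespace WCAS

variable {ι O : Type*}

/-- The domain of a partial realization `ψ : ι → Option O`. -/
def dom (ψ : ι → Option O) : Set ι := {e | ψ e ≠ none}

/-- A (full) realization `φ` is consistent with a partial realization `ψ`. -/
def consistent (φ : ι → O) (ψ : ι → Option O) : Prop :=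
  ∀ e o, ψ e = some o → φ e = o

/-- `ψ` is a subrealization of `ψ'` (written `ψ ⊆ ψ'`). -/
def subreal (ψ ψ' : ι → Option O) : Prop :=
  ∀ e o, ψ e = some o → ψ' e = some o

/-- Extend a partial realization `ψ` by observing state `o` for item `e`. -/
def extendPR [DecidableEq ι] (ψ : ι → Option O) (e : ι) (o : O) : ι → Option O :=
  fun x => if x = e then some o else ψ x

/-- The empty partial realization. -/
def emptyPR : ι → Option O := fun _ => none

/-- View a full realization as a partial realization with full domain. -/
def toPR (φ : ι → O) : ι → Option O := fun e => some (φ e)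

/-- `O(e, ψ)`: the set of possible states of item `e` given observation `ψ`,
with respect to the set `U` of possible realizations. -/
def Ostates (U : Set (ι → O)) (e : ι) (ψ : ι → Option O) : Set O :=
  {o | ∃ φ ∈ U, consistent φ ψ ∧ φ e = o}

/-- The worst-case marginal utility `Δwc(e | ψ)` of item `e` on top of `ψ`. -/
noncomputable def Dwc [DecidableEq ι] (f : (ι → Option O) → ℝ) (U : Set (ι → O))
    (e : ι) (ψ : ι → Option O) : ℝ :=
  sInf ((fun o => f (extendPR ψ e o) - f ψ) '' Ostates U e ψ)

/-- `f` is worst-case monotone. -/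
def WCMonotone [DecidableEq ι] (f : (ι → Option O) → ℝ) (U : Set (ι → O)) : Prop :=
  ∀ ψ : ι → Option O, (∃ φ ∈ U, consistent φ ψ) →
    ∀ e, e ∉ dom ψ → 0 ≤ Dwc f U e ψ

/-- `f` is worst-case submodular. -/
def WCSubmodular [DecidableEq ι] (f : (ι → Option O) → ℝ) (U : Set (ι → O)) : Prop :=
  ∀ ψ ψ' : ι → Option O, subreal ψ ψ' → (∃ φ ∈ U, consistent φ ψ') →
    ∀ e, e ∉ dom ψ' → Dwc f U e ψ' ≤ Dwc f U e ψ

/-- An adaptive policy maps each observation either to an item outside its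
domain or to `none` (stop). -/
def ValidPolicy (π : (ι → Option O) → Option ι) : Prop :=
  ∀ ψ e, π ψ = some e → ψ e = none

/-- One step of executing policy `π` under realization `φ`. -/
def stepPolicy [DecidableEq ι] (π : (ι → Option O) → Option ι) (φ : ι → O)
    (ψ : ι → Option O) : ι → Option O :=
  match π ψ with
  | none => ψ
  | some e => extendPR ψ e (φ e)

/-- Executing policy `π` under realization `φ` for `n` steps, starting from the
empty observation. -/
def runPolicy [DecidableEq ι] (π : (ι → Option O) → Option ι) (φ : ι → O) :
    ℕ → ι → Option O
  | 0 => emptyPR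
  | n + 1 => stepPolicy π φ (runPolicy π φ n)

/-- The final partial realization `ψ(π, φ)` produced by executing `π` under `φ`
(a valid policy over a finite ground set terminates within `card ι` steps). -/
def finalPR [DecidableEq ι] [Fintype ι] (π : (ι → Option O) → Option ι) (φ : ι → O) :
    ι → Option O :=
  runPolicy π φ (Fintype.card ι)

open scoped Classical in
/-- The total cost `c(dom ψ)` of the items in the domain of `ψ`. -/
noncomputable def costPR [Fintype ι] (c : ι → ℝ) (ψ : ι → Option O) : ℝ :=
  ∑ e : ι, if (ψ e).isSome then c e else 0

/-- The worst-case cost `c_wc(π) = max_{φ ∈ U} c(dom ψ(π, φ))`. -/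
noncomputable def cwc [DecidableEq ι] [Fintype ι] (c : ι → ℝ) (U : Set (ι → O))
    (π : (ι → Option O) → Option ι) : ℝ :=
  sSup ((fun φ => costPR c (finalPR π φ)) '' U)

/-- The worst-case utility `f_wc(π) = min_{φ ∈ U} f(ψ(π, φ))`. -/
noncomputable def fwc [DecidableEq ι] [Fintype ι] (f : (ι → Option O) → ℝ)
    (U : Set (ι → O)) (π : (ι → Option O) → Option ι) : ℝ :=
  sInf ((fun φ => f (finalPR π φ)) '' U)

/-- `ψ` is reachable by executing `π` under some realization in `U`. -/
def Reachable [DecidableEq ι] (π : (ι → Option O) → Option ι) (U : Set (ι → O))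
    (ψ : ι → Option O) : Prop :=
  ∃ φ ∈ U, ∃ n, runPolicy π φ n = ψ

/-- Policy `π` covers the goal value `Q`: under every realization in `U`,
its final observation has utility at least `Q`. -/
def Covers [DecidableEq ι] [Fintype ι] (f : (ι → Option O) → ℝ) (U : Set (ι → O))
    (π : (ι → Option O) → Option ι) (Q : ℝ) : Prop :=
  ∀ φ ∈ U, Q ≤ f (finalPR π φ)

/-- The worst-case density-greedy policy for the cover problem with goal `Q`:
it stops at observations with `f ψ ≥ Q`, and at any reachable observation with
`f ψ < Q` it selects an item maximizing `Δwc(e | ψ) / c(e)`. -/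
def CoverGreedy [DecidableEq ι] [Fintype ι] (f : (ι → Option O) → ℝ)
    (U : Set (ι → O)) (c : ι → ℝ) (Q : ℝ) (π : (ι → Option O) → Option ι) : Prop :=
  ValidPolicy π ∧
  (∀ ψ : ι → Option O, Q ≤ f ψ → π ψ = none) ∧
  (∀ ψ : ι → Option O, Reachable π U ψ → f ψ < Q →
    ∃ e, e ∉ dom ψ ∧ π ψ = some e ∧
      ∀ e', e' ∉ dom ψ → Dwc f U e' ψ / c e' ≤ Dwc f U e ψ / c e)

/-- The budgeted worst-case density-greedy policy: at any reachable observation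
it picks a density-maximizing item and selects it if the budget permits,
stopping otherwise. -/
def BudgetGreedy [DecidableEq ι] [Fintype ι] (f : (ι → Option O) → ℝ)
    (U : Set (ι → O)) (c : ι → ℝ) (B : ℝ) (π : (ι → Option O) → Option ι) : Prop :=
  ValidPolicy π ∧
  ∀ ψ : ι → Option O, Reachable π U ψ → dom ψ ≠ Set.univ →
    ∃ e, e ∉ dom ψ ∧
      (∀ e', e' ∉ dom ψ → Dwc f U e' ψ / c e' ≤ Dwc f U e ψ / c e) ∧
      ((costPR c ψ + c e ≤ B ∧ π ψ = some e) ∨ (B < costPR c ψ + c e ∧ π ψ = none))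

/-- The relaxed budgeted worst-case density-greedy policy: it keeps selecting
density-maximizing items while the cost spent so far is within the budget
(thus also selecting the first item that makes the total cost exceed the
budget), and stops once the budget has been exceeded. -/
def RelaxedBudgetGreedy [DecidableEq ι] [Fintype ι] (f : (ι → Option O) → ℝ)
    (U : Set (ι → O)) (c : ι → ℝ) (B : ℝ) (π : (ι → Option O) → Option ι) : Prop :=
  ValidPolicy π ∧
  (∀ ψ : ι → Option O, Reachable π U ψ → B < costPR c ψ → π ψ = none) ∧
  (∀ ψ : ι → Option O, Reachable π U ψ → costPR c ψ ≤ B → dom ψ ≠ Set.univ →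
    ∃ e, e ∉ dom ψ ∧ π ψ = some e ∧
      ∀ e', e' ∉ dom ψ → Dwc f U e' ψ / c e' ≤ Dwc f U e ψ / c e)

section PartialRealization

variable {ψ ψ' σ : ι → Option O} {φ : ι → O} {e : ι} {o : O}

lemma notMem_dom : e ∉ dom ψ ↔ ψ e = none := by
  simp [dom]

lemma subreal.trans {ψ'' : ι → Option O} (h : subreal ψ ψ') (h' : subreal ψ' ψ'') :
    subreal ψ ψ'' :=
  fun x o hx => h' x o (h x o hx)

lemma subreal_emptyPR (ψ : ι → Option O) : subreal emptyPR ψ := by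
  intro x o h
  simp [emptyPR] at h

lemma consistent_emptyPR (φ : ι → O) : consistent φ (emptyPR : ι → Option O) := by
  intro x o h
  simp [emptyPR] at h

lemma consistent.of_subreal (h : consistent φ ψ') (hs : subreal ψ ψ') : consistent φ ψ :=
  fun x o hx => h x o (hs x o hx)

variable [DecidableEq ι]

@[simp]
lemma extendPR_self : extendPR ψ e o e = some o := by
  simp [extendPR]

@[simp]
lemma extendPR_of_ne {x : ι} (h : x ≠ e) : extendPR ψ e o x = ψ x := by
  simp [extendPR, h]

lemma subreal_extendPR (he : ψ e = none) : subreal ψ (extendPR ψ e o) := by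
  intro x o' hx
  by_cases hxe : x = e
  · simp_all
  · rwa [extendPR_of_ne hxe]

lemma consistent.extendPR (h : consistent φ ψ) (ho : φ e = o) :
    consistent φ (extendPR ψ e o) := by
  intro x o' hx
  by_cases hxe : x = e
  · subst hxe
    simp_all
  · exact h x o' (by rwa [extendPR_of_ne hxe] at hx)

lemma subreal.extendPR_left {ψ' : ι → Option O} (hs : subreal ψ ψ') (ho : ψ' e = some o) :
    subreal (extendPR ψ e o) ψ' := by
  intro x o' hx
  by_cases hxe : x = e
  · subst hxe; simp_all
  · exact hs x o' (by rwa [extendPR_of_ne hxe] at hx)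

end PartialRealization

section WorstCaseMarginal

variable [DecidableEq ι] [Finite O] {U : Set (ι → O)} {f : (ι → Option O) → ℝ}
  {ψ ψ' : ι → Option O} {φ : ι → O} {e : ι}

lemma Dwc_le {o : O} (ho : o ∈ Ostates U e ψ) : Dwc f U e ψ ≤ f (extendPR ψ e o) - f ψ :=
  csInf_le ((Set.toFinite _).image _).bddBelow ⟨o, ho, rfl⟩

lemma exists_Dwc_eq (h : ∃ φ ∈ U, consistent φ ψ) :
    ∃ φ ∈ U, consistent φ ψ ∧ f (extendPR ψ e (φ e)) - f ψ = Dwc f U e ψ := by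
  obtain ⟨φ, hφ, hcons⟩ := h
  have hne : (Ostates U e ψ).Nonempty := ⟨φ e, φ, hφ, hcons, rfl⟩
  have hmem : Dwc f U e ψ ∈ (fun o => f (extendPR ψ e o) - f ψ) '' Ostates U e ψ :=
    (hne.image _).csInf_mem ((Set.toFinite _).image _)
  obtain ⟨_, ⟨φ', hφ', hcons', rfl⟩, heq⟩ := hmem
  exact ⟨φ', hφ', hcons', heq⟩

lemma WCMonotone.le_extendPR (hmono : WCMonotone f U) (hφ : φ ∈ U) (hcons : consistent φ ψ)
    (he : ψ e = none) : f ψ ≤ f (extendPR ψ e (φ e)) := by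
  have h0 := hmono ψ ⟨φ, hφ, hcons⟩ e (notMem_dom.mpr he)
  have := Dwc_le (f := f) (e := e) (o := φ e) ⟨φ, hφ, hcons, rfl⟩
  linarith

lemma WCMonotone.le_of_subreal [Fintype ι] (hmono : WCMonotone f U) (hφ : φ ∈ U)
    (hcons : consistent φ ψ') (hs : subreal ψ ψ') : f ψ ≤ f ψ' := by
  suffices ∀ s : Finset ι, ∀ ψ, subreal ψ ψ' → (∀ x, ψ x = none → ψ' x ≠ none → x ∈ s) →
      f ψ ≤ f ψ' from this Finset.univ ψ hs fun x _ _ => Finset.mem_univ x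
  intro s
  induction s using Finset.induction_on with
  | empty =>
    intro ψ hs hdiff
    have : ψ = ψ' := by
      funext x
      cases hx : ψ x with
      | some o => exact (hs x o hx).symm
      | none => by_contra hne; exact Finset.notMem_empty x (hdiff x hx (Ne.symm hne))
    rw [this]
  | insert a s _ ih =>
    intro ψ hs hdiff
    by_cases hnew : ψ a = none ∧ ψ' a ≠ none
    · obtain ⟨o, ho⟩ := Option.ne_none_iff_exists'.mp hnew.2
      have hφa : φ a = o := hcons a o ho
      have hdiff' : ∀ x, extendPR ψ a o x = none → ψ' x ≠ none → x ∈ s := by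
        intro x hx hx'
        by_cases hxa : x = a
        · subst hxa; simp at hx
        · rw [extendPR_of_ne hxa] at hx
          exact (Finset.mem_insert.mp (hdiff x hx hx')).resolve_left hxa
      calc f ψ ≤ f (extendPR ψ a (φ a)) :=
            hmono.le_extendPR hφ (hcons.of_subreal hs) hnew.1
        _ ≤ f ψ' := hφa ▸ ih _ (hs.extendPR_left ho) hdiff'
    · refine ih ψ hs fun x hx hx' => ?_
      have hxa : x ≠ a := by rintro rfl; exact hnew ⟨hx, hx'⟩
      exact (Finset.mem_insert.mp (hdiff x hx hx')).resolve_left hxa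

end WorstCaseMarginal

section Cost

variable [Fintype ι] (c : ι → ℝ)

@[simp]
lemma costPR_emptyPR : costPR c (emptyPR : ι → Option O) = 0 := by
  simp [costPR, emptyPR]

lemma costPR_extendPR [DecidableEq ι] {ψ : ι → Option O} {e : ι} (he : ψ e = none) (o : O) :
    costPR c (extendPR ψ e o) = costPR c ψ + c e := by
  have hsplit : ∀ x, (if (extendPR ψ e o x).isSome then c x else 0)
      = (if (ψ x).isSome then c x else 0) + (if x = e then c x else 0) := by
    intro x
    by_cases hxe : x = e
    · subst hxe; simp [he]
    · simp [hxe]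
  simp only [costPR, hsplit, Finset.sum_add_distrib, Finset.sum_ite_eq', Finset.mem_univ,
    if_true]

end Cost

section Execution

variable [DecidableEq ι] {π : (ι → Option O) → Option ι} {φ φ' : ι → O}
  {ψ : ι → Option O} {e : ι}

lemma stepPolicy_of_none (h : π ψ = none) : stepPolicy π φ ψ = ψ := by
  simp [stepPolicy, h]

lemma stepPolicy_of_some (h : π ψ = some e) : stepPolicy π φ ψ = extendPR ψ e (φ e) := by
  simp [stepPolicy, h]

lemma runPolicy_succ (n : ℕ) : runPolicy π φ (n + 1) = stepPolicy π φ (runPolicy π φ n) :=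
  rfl

lemma consistent.stepPolicy (h : consistent φ ψ) : consistent φ (stepPolicy π φ ψ) := by
  cases hπ : π ψ with
  | none => rwa [stepPolicy_of_none hπ]
  | some e => rw [stepPolicy_of_some hπ]; exact h.extendPR rfl

lemma consistent_runPolicy (n : ℕ) : consistent φ (runPolicy π φ n) := by
  induction n with
  | zero => exact consistent_emptyPR φ
  | succ n ih => exact ih.stepPolicy

lemma ValidPolicy.subreal_stepPolicy (hv : ValidPolicy π) : subreal ψ (stepPolicy π φ ψ) := by
  cases hπ : π ψ with
  | none => rw [stepPolicy_of_none hπ]; exact fun _ _ h => h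
  | some e => rw [stepPolicy_of_some hπ]; exact subreal_extendPR (hv ψ e hπ)

lemma ValidPolicy.runPolicy_mono (hv : ValidPolicy π) {m n : ℕ} (h : m ≤ n) :
    subreal (runPolicy π φ m) (runPolicy π φ n) := by
  induction n, h using Nat.le_induction with
  | base => exact fun _ _ h => h
  | succ n _ ih => exact ih.trans hv.subreal_stepPolicy

lemma ValidPolicy.runPolicy_congr (hv : ValidPolicy π) {n : ℕ}
    (h : consistent φ' (runPolicy π φ n)) : runPolicy π φ' n = runPolicy π φ n := by
  suffices ∀ k ≤ n, runPolicy π φ' k = runPolicy π φ k from this n le_rfl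
  intro k hk
  induction k with
  | zero => rfl
  | succ k ih =>
    rw [runPolicy_succ, runPolicy_succ, ih (Nat.le_of_succ_le hk)]
    cases hπ : π (runPolicy π φ k) with
    | none => rw [stepPolicy_of_none hπ, stepPolicy_of_none hπ]
    | some e =>
      have hobs : runPolicy π φ (k + 1) e = some (φ e) := by
        rw [runPolicy_succ, stepPolicy_of_some hπ, extendPR_self]
      rw [stepPolicy_of_some hπ, stepPolicy_of_some hπ, h e (φ e) (hv.runPolicy_mono hk e _ hobs)]

variable [Fintype ι]

lemma ValidPolicy.stop_finalPR (hv : ValidPolicy π) : π (finalPR π φ) = none := by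
  classical
  by_contra hstop
  let observed (n : ℕ) := Finset.univ.filter fun x => (runPolicy π φ n x).isSome
  have hgrow : ∀ n, π (runPolicy π φ n) = none ∨ n ≤ (observed n).card := by
    intro n
    induction n with
    | zero => exact Or.inr (Nat.zero_le _)
    | succ n ih =>
      cases hπ : π (runPolicy π φ n) with
      | none => left; rwa [runPolicy_succ, stepPolicy_of_none hπ]
      | some e =>
        right
        have he : runPolicy π φ n e = none := hv _ e hπ
        have hinsert : observed (n + 1) = insert e (observed n) := by
          ext x
          by_cases hxe : x = e
          · subst hxe; simp [observed, runPolicy_succ, stepPolicy_of_some hπ]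
          · simp [observed, runPolicy_succ, stepPolicy_of_some hπ, hxe]
        rw [hinsert, Finset.card_insert_of_notMem (by simp [observed, he])]
        simpa [hπ] using ih
  have hcard := (hgrow (Fintype.card ι)).resolve_left hstop
  obtain ⟨e, hπ⟩ := Option.ne_none_iff_exists'.mp hstop
  have hall : observed (Fintype.card ι) = Finset.univ :=
    Finset.eq_univ_of_card _ (le_antisymm (Finset.card_le_univ _) hcard)
  have he : e ∈ observed (Fintype.card ι) := hall ▸ Finset.mem_univ e
  simp [observed, show runPolicy π φ (Fintype.card ι) e = none from hv _ e hπ] at he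

end Execution

section Merge

def mergePR (ψ σ : ι → Option O) : ι → Option O :=
  fun x => (ψ x).or (σ x)

variable {ψ σ : ι → Option O} {φ : ι → O}

@[simp]
lemma mergePR_emptyPR : mergePR ψ emptyPR = ψ := by
  funext x
  cases h : ψ x <;> simp [mergePR, emptyPR, h]

lemma subreal_mergePR_left : subreal ψ (mergePR ψ σ) := by
  intro x o h
  simp [mergePR, h]

lemma subreal_mergePR_right (hψ : consistent φ ψ) (hσ : consistent φ σ) :
    subreal σ (mergePR ψ σ) := by
  intro x o h
  cases hx : ψ x with
  | none => simp [mergePR, hx, h]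
  | some o' => simp [mergePR, hx, ← hψ x o' hx, hσ x o h]

lemma consistent.mergePR (hψ : consistent φ ψ) (hσ : consistent φ σ) :
    consistent φ (mergePR ψ σ) := by
  intro x o h
  cases hx : ψ x with
  | none => exact hσ x o (by simpa [WCAS.mergePR, hx] using h)
  | some o' => exact hψ x o (by simpa [WCAS.mergePR, hx] using h)

variable [DecidableEq ι] {e : ι} {o : O}

lemma mergePR_extendPR_of_some {o' : O} (he : ψ e = some o') :
    mergePR ψ (extendPR σ e o) = mergePR ψ σ := by
  funext x
  by_cases hxe : x = e
  · subst hxe; simp [mergePR, he]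
  · simp [mergePR, hxe]

lemma mergePR_extendPR_of_none (he : ψ e = none) :
    mergePR ψ (extendPR σ e o) = extendPR (mergePR ψ σ) e o := by
  funext x
  by_cases hxe : x = e
  · subst hxe; simp [mergePR, he]
  · simp [mergePR, hxe]

end Merge

section Adversary

variable [DecidableEq ι] [Fintype ι] [Finite O] {U : Set (ι → O)} {f : (ι → Option O) → ℝ}
  {π : (ι → Option O) → Option ι} {c : ι → ℝ} {ψ0 : ι → Option O} {d : ℝ}

/-- The adversary answers each query of `π` with a worst-case state given `ψ0` together with
everything observed so far; by submodularity each answer adds at most `c e * d` to `f`. -/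
lemma exists_stepPolicy_gain_le (hv : ValidPolicy π) (hsub : WCSubmodular f U)
    (hc : ∀ e, 0 ≤ c e) (hd0 : 0 ≤ d) (hd : ∀ e, e ∉ dom ψ0 → Dwc f U e ψ0 ≤ c e * d)
    {φ : ι → O} {σ : ι → Option O} (hφ : φ ∈ U) (hφ0 : consistent φ ψ0)
    (hσ : consistent φ σ) :
    ∃ φ' ∈ U, consistent φ' ψ0 ∧ consistent φ' σ ∧
      f (mergePR ψ0 (stepPolicy π φ' σ)) - d * costPR c (stepPolicy π φ' σ) ≤
        f (mergePR ψ0 σ) - d * costPR c σ := by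
  cases hπ : π σ with
  | none => exact ⟨φ, hφ, hφ0, hσ, by rw [stepPolicy_of_none hπ]⟩
  | some e =>
    have heσ : σ e = none := hv σ e hπ
    cases hψ0e : ψ0 e with
    | some o =>
      refine ⟨φ, hφ, hφ0, hσ, ?_⟩
      rw [stepPolicy_of_some hπ, mergePR_extendPR_of_some hψ0e, costPR_extendPR c heσ]
      nlinarith [mul_nonneg hd0 (hc e)]
    | none =>
      have hm : ∃ φ ∈ U, consistent φ (mergePR ψ0 σ) := ⟨φ, hφ, hφ0.mergePR hσ⟩
      obtain ⟨φ', hφ', hφ'm, hgain⟩ := exists_Dwc_eq (f := f) (e := e) hm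
      have hme : mergePR ψ0 σ e = none := by simp [mergePR, hψ0e, heσ]
      have hsubmod : Dwc f U e (mergePR ψ0 σ) ≤ Dwc f U e ψ0 :=
        hsub _ _ subreal_mergePR_left hm e (notMem_dom.mpr hme)
      have hde := hd e (notMem_dom.mpr hψ0e)
      refine ⟨φ', hφ', hφ'm.of_subreal subreal_mergePR_left,
        hφ'm.of_subreal (subreal_mergePR_right hφ0 hσ), ?_⟩
      rw [stepPolicy_of_some hπ, mergePR_extendPR_of_none hψ0e, costPR_extendPR c heσ]
      linarith

lemma exists_runPolicy_gain_le (hv : ValidPolicy π) (hsub : WCSubmodular f U)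
    (hc : ∀ e, 0 ≤ c e) (hd0 : 0 ≤ d) (hd : ∀ e, e ∉ dom ψ0 → Dwc f U e ψ0 ≤ c e * d)
    (h0 : ∃ φ ∈ U, consistent φ ψ0) (n : ℕ) :
    ∃ φ ∈ U, consistent φ ψ0 ∧
      f (mergePR ψ0 (runPolicy π φ n)) - d * costPR c (runPolicy π φ n) ≤ f ψ0 := by
  induction n with
  | zero =>
    obtain ⟨φ, hφ, hφ0⟩ := h0
    exact ⟨φ, hφ, hφ0, by simp [runPolicy]⟩
  | succ n ih =>
    obtain ⟨φ, hφ, hφ0, hbound⟩ := ih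
    obtain ⟨φ', hφ', hφ'0, hφ'σ, hstep⟩ :=
      exists_stepPolicy_gain_le hv hsub hc hd0 hd hφ hφ0 (consistent_runPolicy n)
    refine ⟨φ', hφ', hφ'0, ?_⟩
    rw [runPolicy_succ, hv.runPolicy_congr hφ'σ]
    linarith

theorem fwc_le_add_mul_of_Dwc_le (hv : ValidPolicy π) (hmono : WCMonotone f U)
    (hsub : WCSubmodular f U) (hc : ∀ e, 0 ≤ c e) {B : ℝ} (hπB : cwc c U π ≤ B)
    (h0 : ∃ φ ∈ U, consistent φ ψ0) (hd0 : 0 ≤ d)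
    (hd : ∀ e, e ∉ dom ψ0 → Dwc f U e ψ0 ≤ c e * d) :
    fwc f U π ≤ f ψ0 + d * B := by
  obtain ⟨φ, hφ, hφ0, hbound⟩ :=
    exists_runPolicy_gain_le hv hsub hc hd0 hd h0 (Fintype.card ι)
  have hbound : f (mergePR ψ0 (finalPR π φ)) - d * costPR c (finalPR π φ) ≤ f ψ0 := hbound
  have hfwc : fwc f U π ≤ f (finalPR π φ) :=
    csInf_le ((Set.toFinite U).image _).bddBelow ⟨φ, hφ, rfl⟩
  have hmerge : f (finalPR π φ) ≤ f (mergePR ψ0 (finalPR π φ)) :=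
    hmono.le_of_subreal hφ (hφ0.mergePR (consistent_runPolicy _))
      (subreal_mergePR_right hφ0 (consistent_runPolicy _))
  have hcost : costPR c (finalPR π φ) ≤ B :=
    (le_csSup ((Set.toFinite U).image _).bddAbove ⟨φ, hφ, rfl⟩).trans hπB
  nlinarith [mul_le_mul_of_nonneg_left hcost hd0]

theorem fwc_le_add_density_mul (hv : ValidPolicy π) (hmono : WCMonotone f U)
    (hsub : WCSubmodular f U) (hc : ∀ e, 0 < c e) {B : ℝ} (hπB : cwc c U π ≤ B)
    {φ : ι → O} {ψ : ι → Option O} {e : ι} (hφ : φ ∈ U) (hcons : consistent φ ψ)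
    (he : e ∉ dom ψ) (hmax : ∀ e', e' ∉ dom ψ → Dwc f U e' ψ / c e' ≤ Dwc f U e ψ / c e) :
    fwc f U π ≤ f ψ + Dwc f U e ψ / c e * B := by
  refine fwc_le_add_mul_of_Dwc_le hv hmono hsub (fun e => (hc e).le) hπB ⟨φ, hφ, hcons⟩
    (div_nonneg (hmono ψ ⟨φ, hφ, hcons⟩ e he) (hc e).le) fun e' he' => ?_
  rw [mul_comm, ← div_le_iff₀ (hc e')]
  exact hmax e' he'

end Adversary

lemma sub_le_mul_exp_of_le_div_mul {Q g D K c B : ℝ} (hQ : 0 ≤ Q) (hc : 0 < c) (hcB : c ≤ B)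
    (hg : g ≤ Q * Real.exp (-K / B)) (hgD : g ≤ D / c * B) :
    g - D ≤ Q * Real.exp (-(K + c) / B) := by
  have hB : 0 < B := hc.trans_le hcB
  have hD : g * (c / B) ≤ D := by
    rw [div_mul_eq_mul_div, le_div_iff₀ hc] at hgD
    rw [← mul_div_assoc, div_le_iff₀ hB]
    exact hgD
  have hfrac : c / B ≤ 1 := (div_le_one hB).mpr hcB
  calc g - D ≤ g * (1 - c / B) := by linarith
    _ ≤ Q * Real.exp (-K / B) * (1 - c / B) := mul_le_mul_of_nonneg_right hg (by linarith)
    _ ≤ Q * Real.exp (-K / B) * Real.exp (-(c / B)) := by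
      gcongr
      linarith [Real.add_one_le_exp (-(c / B))]
    _ = Q * Real.exp (-(K + c) / B) := by
      rw [mul_assoc, ← Real.exp_add]
      congr 2
      ring

section Greedy

variable [DecidableEq ι] [Fintype ι] {U : Set (ι → O)} {f : (ι → Option O) → ℝ}
  {c : ι → ℝ} {B : ℝ} {πg πs : (ι → Option O) → Option ι} {ψ : ι → Option O} {φ : ι → O}

lemma BudgetGreedy.density_max_of_eq_some (hg : BudgetGreedy f U c B πg)
    (hr : Reachable πg U ψ) {e : ι} (hπ : πg ψ = some e) :
    e ∉ dom ψ ∧ ∀ e', e' ∉ dom ψ → Dwc f U e' ψ / c e' ≤ Dwc f U e ψ / c e := by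
  have he : e ∉ dom ψ := notMem_dom.mpr (hg.1 ψ e hπ)
  obtain ⟨e', -, hmax, hbr⟩ := hg.2 ψ hr fun h => he (h ▸ Set.mem_univ e)
  obtain rfl : e' = e := by
    rcases hbr with ⟨-, h⟩ | ⟨-, h⟩
    · exact Option.some.inj (h.symm.trans hπ)
    · rw [h] at hπ; cases hπ
  exact ⟨he, hmax⟩

lemma BudgetGreedy.exists_of_eq_none (hg : BudgetGreedy f U c B πg)
    (hr : Reachable πg U ψ) (hπ : πg ψ = none) (hdom : dom ψ ≠ Set.univ) :
    ∃ e, e ∉ dom ψ ∧ (∀ e', e' ∉ dom ψ → Dwc f U e' ψ / c e' ≤ Dwc f U e ψ / c e) ∧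
      B < costPR c ψ + c e := by
  obtain ⟨e, he, hmax, hbr⟩ := hg.2 ψ hr hdom
  rcases hbr with ⟨-, h⟩ | ⟨hover, -⟩
  · rw [h] at hπ; cases hπ
  · exact ⟨e, he, hmax, hover⟩

variable [Finite O]

lemma fwc_nonneg (hmono : WCMonotone f U) (hempty : f emptyPR = 0)
    (π : (ι → Option O) → Option ι) : 0 ≤ fwc f U π := by
  refine Real.sInf_nonneg ?_
  rintro _ ⟨φ, hφ, rfl⟩
  rw [← hempty]
  exact hmono.le_of_subreal hφ (consistent_runPolicy _) (subreal_emptyPR _)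

/-- Each selected item `e` shrinks the gap by a factor `1 - c e / B ≤ exp (-c e / B)`. -/
lemma BudgetGreedy.sub_le_mul_exp_runPolicy (hg : BudgetGreedy f U c B πg)
    (hπs : ValidPolicy πs) (hmono : WCMonotone f U) (hsub : WCSubmodular f U)
    (hempty : f emptyPR = 0) (hc : ∀ e, 0 < c e) (hcB : ∀ e, c e ≤ B)
    (hπsB : cwc c U πs ≤ B) (hφ : φ ∈ U) (n : ℕ) :
    fwc f U πs - f (runPolicy πg φ n) ≤
      fwc f U πs * Real.exp (-costPR c (runPolicy πg φ n) / B) := by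
  induction n with
  | zero => simp [runPolicy, hempty]
  | succ n ih =>
    rw [runPolicy_succ]
    cases hπ : πg (runPolicy πg φ n) with
    | none => rwa [stepPolicy_of_none hπ]
    | some e =>
      obtain ⟨he, hmax⟩ := hg.density_max_of_eq_some ⟨φ, hφ, n, rfl⟩ hπ
      have hcons : consistent φ (runPolicy πg φ n) := consistent_runPolicy n
      have hgap := fwc_le_add_density_mul hπs hmono hsub hc hπsB hφ hcons he hmax
      have hgain : Dwc f U e (runPolicy πg φ n) ≤
          f (extendPR (runPolicy πg φ n) e (φ e)) - f (runPolicy πg φ n) :=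
        Dwc_le ⟨φ, hφ, hcons, rfl⟩
      have hstep := sub_le_mul_exp_of_le_div_mul (fwc_nonneg hmono hempty πs) (hc e) (hcB e)
        ih (sub_le_iff_le_add'.mpr hgap)
      rw [stepPolicy_of_some hπ, costPR_extendPR c (notMem_dom.mp he)]
      linarith

lemma BudgetGreedy.mul_le_finalPR_add_sSup_Dwc (hg : BudgetGreedy f U c B πg)
    (hπs : ValidPolicy πs) (hmono : WCMonotone f U) (hsub : WCSubmodular f U)
    (hempty : f emptyPR = 0) (hc : ∀ e, 0 < c e) (hcB : ∀ e, c e ≤ B)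
    (hπsB : cwc c U πs ≤ B) (hφ : φ ∈ U) :
    fwc f U πs * (1 - (Real.exp 1)⁻¹) ≤
      f (finalPR πg φ) + sSup (Set.range fun e => Dwc f U e (emptyPR : ι → Option O)) := by
  set M := sSup (Set.range fun e => Dwc f U e (emptyPR : ι → Option O))
  have hQ := fwc_nonneg hmono hempty πs
  have hM : 0 ≤ M := Real.sSup_nonneg <| by
    rintro _ ⟨e, rfl⟩
    exact hmono _ ⟨φ, hφ, consistent_emptyPR φ⟩ e (notMem_dom.mpr rfl)
  have hinv : fwc f U πs - f (finalPR πg φ) ≤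
      fwc f U πs * Real.exp (-costPR c (finalPR πg φ) / B) :=
    hg.sub_le_mul_exp_runPolicy hπs hmono hsub hempty hc hcB hπsB hφ _
  have hcons : consistent φ (finalPR πg φ) := consistent_runPolicy _
  have he1 : 0 ≤ fwc f U πs * (Real.exp 1)⁻¹ := by positivity
  by_cases hdom : dom (finalPR πg φ) = Set.univ
  · have := fwc_le_add_mul_of_Dwc_le hπs hmono hsub (fun e => (hc e).le) hπsB
      ⟨φ, hφ, hcons⟩ le_rfl fun e he => absurd (hdom ▸ Set.mem_univ e) he
    linarith
  have hreach : Reachable πg U (finalPR πg φ) := ⟨φ, hφ, Fintype.card ι, rfl⟩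
  obtain ⟨e, he, hmax, hover⟩ := hg.exists_of_eq_none hreach hg.1.stop_finalPR hdom
  have hgap := fwc_le_add_density_mul hπs hmono hsub hc hπsB hφ hcons he hmax
  have hend := sub_le_mul_exp_of_le_div_mul hQ (hc e) (hcB e) hinv (sub_le_iff_le_add'.mpr hgap)
  have hB : 0 < B := (hc e).trans_le (hcB e)
  have hexp : fwc f U πs * Real.exp (-(costPR c (finalPR πg φ) + c e) / B) ≤
      fwc f U πs * (Real.exp 1)⁻¹ := by
    rw [← Real.exp_neg]
    gcongr
    rw [neg_div, neg_le_neg_iff, le_div_iff₀ hB]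
    linarith
  have hsubmod : Dwc f U e (finalPR πg φ) ≤ Dwc f U e emptyPR :=
    hsub _ _ (subreal_emptyPR _) ⟨φ, hφ, hcons⟩ e he
  have hDM : Dwc f U e emptyPR ≤ M := le_csSup (Set.finite_range _).bddAbove ⟨e, rfl⟩
  linarith

end Greedy

theorem stmt_14_general {ι O : Type*} [Fintype ι] [DecidableEq ι] [Fintype O]
    (U : Set (ι → O)) (hU : U.Nonempty)
    (c : ι → ℕ) (hc : ∀ e, 0 < c e)
    (f : (ι → Option O) → ℝ)
    (hmono : WCMonotone f U) (hsub : WCSubmodular f U)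
    (hempty : f emptyPR = 0)
    (B : ℕ) (hcB : ∀ e, c e ≤ B)
    (πg : (ι → Option O) → Option ι)
    (hg : BudgetGreedy f U (fun e => (c e : ℝ)) (B : ℝ) πg)
    (πs : (ι → Option O) → Option ι) (hπs : ValidPolicy πs)
    (hπsB : cwc (fun e => (c e : ℝ)) U πs ≤ (B : ℝ)) :
    ((1 - (Real.exp 1)⁻¹) / 2) * fwc f U πs ≤
      max (fwc f U πg)
        (sSup (Set.range fun e => Dwc f U e (emptyPR : ι → Option O))) := by
  set M := sSup (Set.range fun e => Dwc f U e (emptyPR : ι → Option O))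
  have hgreedy : fwc f U πs * (1 - (Real.exp 1)⁻¹) - M ≤ fwc f U πg := by
    refine le_csInf (hU.image _) ?_
    rintro _ ⟨φ, hφ, rfl⟩
    have := hg.mul_le_finalPR_add_sSup_Dwc hπs hmono hsub hempty
      (fun e => by exact_mod_cast hc e) (fun e => by exact_mod_cast hcB e) hπsB hφ
    linarith
  linarith [le_max_left (fwc f U πg) M, le_max_right (fwc f U πg) M]

/-- **Theorem 4 (main maximization result).** Suppose `f` is worst-case monotone
and worst-case submodular with `f ∅ = 0`, and let `B` be a positive integer
budget with `c e ≤ B` for every item `e`. Let `π^g` be the budgeted worst-case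
density-greedy policy. Then for every adaptive policy `π*` with
`c_wc(π*) ≤ B`,
`max { f_wc(π^g), max_{e ∈ E} Δwc(e | ∅) } ≥ ((1 − 1/e)/2) · f_wc(π*)`. -/
theorem stmt_14 {ι O : Type*} [Fintype ι] [Nonempty ι] [DecidableEq ι] [Fintype O]
    (U : Set (ι → O)) (hU : U.Nonempty)
    (c : ι → ℕ) (hc : ∀ e, 0 < c e)
    (f : (ι → Option O) → ℝ) (hf0 : ∀ ψ, 0 ≤ f ψ)
    (hmono : WCMonotone f U) (hsub : WCSubmodular f U)
    (hempty : f emptyPR = 0)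
    (B : ℕ) (hB : 0 < B) (hcB : ∀ e, c e ≤ B)
    (πg : (ι → Option O) → Option ι)
    (hg : BudgetGreedy f U (fun e => (c e : ℝ)) (B : ℝ) πg)
    (πs : (ι → Option O) → Option ι) (hπs : ValidPolicy πs)
    (hπsB : cwc (fun e => (c e : ℝ)) U πs ≤ (B : ℝ)) :
    ((1 - (Real.exp 1)⁻¹) / 2) * fwc f U πs ≤
      max (fwc f U πg)
        (sSup (Set.range fun e => Dwc f U e (emptyPR : ι → Option O))) :=
  stmt_14_general U hU c hc f hmono hsub hempty B hcB πg hg πs hπs hπsB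

end WCAS
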